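/- arXiv:2306.02787 — 4 statements merged into one kernel-verified Lean document; each statement's English description precedes it below -/
import Mathlib

section
/- Let R be a commutative ℚ-algebra, let r ∈ R and let δ be a natural number such that (r−1)^{δ+1} = 0 in R. Then: (i) for every natural number n, r^n = ∑_{k=0}^{δ} (n(n−1)⋯(n−k+1)/k!) · (r−1)^k (equivalently, r^n = ∑_{k=0}^{δ} C(n,k) (r−1)^k, where C(n,k) is the binomial coefficient); (ii) the equality of polynomials ∑_{k=0}^{δ} (x(x−1)⋯(x−k+1)/k!) (r−1)^k = ∑_{j=0}^{δ} ( ∑_{k=0}^{δ} ∑_{u=0}^{k} ((−1)^{k−u} s(k,j) / (u!(k−u)!)) r^u ) x^j holds in the polynomial ring R[x]. -/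
open Polynomial

/-- The Stirling numbers of the first kind `s(k, j)`, defined by the polynomial identity
`t(t-1)⋯(t-k+1) = ∑_j s(k,j) t^j` (with the empty product equal to `1` when `k = 0`),
i.e. as the coefficients of the descending Pochhammer polynomial. -/
noncomputable def stirlingFirst (k j : ℕ) : ℚ := (descPochhammer ℚ k).coeff j

/-- Let `R` be a commutative `ℚ`-algebra, `r ∈ R` and `δ : ℕ` with
`(r - 1) ^ (δ + 1) = 0`.  Then (i) for every `n : ℕ`,
`r ^ n = ∑_{k=0}^{δ} C(n,k) (r-1)^k` (where `C(n,k) = n(n-1)⋯(n-k+1)/k!` is the binomial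
coefficient); and (ii) the polynomial identity
`∑_{k=0}^{δ} (x(x-1)⋯(x-k+1)/k!) (r-1)^k
  = ∑_{j=0}^{δ} (∑_{k=0}^{δ} ∑_{u=0}^{k} ((-1)^{k-u} s(k,j)/(u!(k-u)!)) r^u) x^j`
holds in `R[x]`. -/
theorem statement1 {R : Type*} [CommRing R] [Algebra ℚ R] (r : R) (δ : ℕ)
    (h : (r - 1) ^ (δ + 1) = 0) :
    (∀ n : ℕ, r ^ n = ∑ k ∈ Finset.range (δ + 1), (n.choose k : R) * (r - 1) ^ k) ∧
    ∑ k ∈ Finset.range (δ + 1),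
        Polynomial.C (algebraMap ℚ R (1 / k.factorial) * (r - 1) ^ k) *
          (descPochhammer ℚ k).map (algebraMap ℚ R)
      = ∑ j ∈ Finset.range (δ + 1),
          Polynomial.C (∑ k ∈ Finset.range (δ + 1), ∑ u ∈ Finset.range (k + 1),
              algebraMap ℚ R
                ((-1 : ℚ) ^ (k - u) * stirlingFirst k j / (u.factorial * (k - u).factorial)) *
                r ^ u) *
            Polynomial.X ^ j := by
  have hz : ∀ k, δ < k → (r - 1) ^ k = 0 := by
    intro k hk
    obtain ⟨c, rfl⟩ := Nat.exists_eq_add_of_le hk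
    rw [pow_add, h, zero_mul]
  constructor
  · intro n
    have key : r ^ n = ∑ k ∈ Finset.range (n + 1), (n.choose k : R) * (r - 1) ^ k := by
      conv_lhs => rw [show r = (r - 1) + 1 by ring, add_pow]
      exact Finset.sum_congr rfl fun k _ => by ring
    rcases le_total n δ with hnd | hnd
    · rw [key]
      refine Finset.sum_subset (Finset.range_subset_range.2 (by omega)) fun k _ hk => ?_
      simp only [Finset.mem_range, not_lt] at hk
      rw [Nat.choose_eq_zero_of_lt (by omega), Nat.cast_zero, zero_mul]
    · rw [key]
      refine (Finset.sum_subset (Finset.range_subset_range.2 (by omega)) fun k _ hk => ?_).symm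
      simp only [Finset.mem_range, not_lt] at hk
      rw [hz k (by omega), mul_zero]
  · ext j
    rw [Polynomial.finset_sum_coeff, Polynomial.finset_sum_coeff]
    simp only [Polynomial.coeff_C_mul, Polynomial.coeff_map, Polynomial.coeff_X_pow,
      mul_ite, mul_one, mul_zero, Finset.sum_ite_eq, Finset.mem_range]
    by_cases hj : j < δ + 1
    · rw [if_pos hj]
      refine Finset.sum_congr rfl fun k _ => ?_
      have hC : algebraMap ℚ R ((descPochhammer ℚ k).coeff j) = algebraMap ℚ R (stirlingFirst k j) := rfl
      rw [hC, sub_pow, Finset.mul_sum, Finset.sum_mul]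
      refine Finset.sum_congr rfl fun u hu => ?_
      rw [Finset.mem_range] at hu
      have hu' : u ≤ k := by omega
      have key : (1 / k.factorial : ℚ) * ((-1) ^ (u + k) * (k.choose u)) * stirlingFirst k j =
          (-1 : ℚ) ^ (k - u) * stirlingFirst k j / (u.factorial * (k - u).factorial) := by
        rw [Nat.cast_choose ℚ hu']
        have hsign : (-1 : ℚ) ^ (u + k) = (-1) ^ (k - u) := by
          rw [show u + k = (k - u) + 2 * u by omega, pow_add, pow_mul]
          simp
        rw [hsign]
        have h1 : (k.factorial : ℚ) ≠ 0 := Nat.cast_ne_zero.2 k.factorial_ne_zero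
        have h2 : (u.factorial : ℚ) ≠ 0 := Nat.cast_ne_zero.2 u.factorial_ne_zero
        have h3 : ((k - u).factorial : ℚ) ≠ 0 := Nat.cast_ne_zero.2 (k - u).factorial_ne_zero
        field_simp
      rw [← key]
      have hCc : ((k.choose u : ℕ) : R) = algebraMap ℚ R ((k.choose u : ℕ) : ℚ) := by
        simp
      have hneg : ((-1 : R) ^ (u + k)) = algebraMap ℚ R ((-1 : ℚ) ^ (u + k)) := by
        simp
      rw [map_mul, map_mul, hCc, hneg, one_pow]
      simp only [map_mul]
      ring
    · rw [if_neg hj]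
      refine Finset.sum_eq_zero fun k hk => ?_
      rw [Finset.mem_range] at hk
      have : (descPochhammer ℚ k).coeff j = 0 := by
        apply Polynomial.coeff_eq_zero_of_natDegree_lt
        rw [descPochhammer_natDegree]
        omega
      rw [this, map_zero, mul_zero]
end

section
/- Let E : ℕ → ℚ be the sequence defined by the identity of formal power series (∑_{j≥0} (E_j/j!) t^j) · (e^t + 1) = 2 in ℚ[[t]], where e^t denotes the exponential power series. Then for every natural number j ≥ 1 one has E_j = 2(−1)^j (2^{1+j} − 1) B_{j+1}/(j+1), where B_{j+1} denotes the (j+1)-st Bernoulli number. -/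
open PowerSeries

lemma aux_bernoulli_mk :
    (PowerSeries.mk fun n => (bernoulli n / n.factorial : ℚ)) * (PowerSeries.exp ℚ - 1)
      = PowerSeries.X := by
  have := bernoulliPowerSeries_mul_exp_sub_one ℚ
  simpa [bernoulliPowerSeries, Algebra.algebraMap_self] using this

lemma aux_exp_sub_one_ne_zero : (PowerSeries.exp ℚ - 1) ≠ 0 := by
  intro h
  have := congrArg (PowerSeries.coeff (R := ℚ) 1) h
  simp [PowerSeries.coeff_exp] at this

lemma aux_exp_add_one_ne_zero : (PowerSeries.exp ℚ + 1) ≠ 0 := by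
  intro h
  have := congrArg (PowerSeries.coeff (R := ℚ) 0) h
  simp [PowerSeries.coeff_exp] at this

lemma aux_key (E : ℕ → ℚ)
    (hE : (PowerSeries.mk fun j => E j / j.factorial) * (PowerSeries.exp ℚ + 1) = 2) :
    PowerSeries.X * (PowerSeries.mk fun j => E j / j.factorial)
      = PowerSeries.C (2 : ℚ) * (PowerSeries.mk fun n => (bernoulli n / n.factorial : ℚ))
        - PowerSeries.C (2 : ℚ) *
          rescale (2 : ℚ) (PowerSeries.mk fun n => (bernoulli n / n.factorial : ℚ)) := by
  set G := PowerSeries.mk fun j => E j / j.factorial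
  set B := PowerSeries.mk fun n => (bernoulli n / n.factorial : ℚ)
  have hB : B * (PowerSeries.exp ℚ - 1) = PowerSeries.X := aux_bernoulli_mk
  have h2 : (PowerSeries.C (2 : ℚ) : ℚ⟦X⟧) = 2 := by
    rw [show ((2 : ℚ) = ((2 : ℕ) : ℚ)) by norm_num, map_natCast]; norm_num
  have hB2 : rescale (2 : ℚ) B * (rescale (2 : ℚ) (PowerSeries.exp ℚ) - 1)
      = 2 * PowerSeries.X := by
    have h := congrArg (rescale (2 : ℚ)) hB
    rw [map_mul, map_sub, map_one, PowerSeries.rescale_X, h2] at h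
    exact h
  have hexp2 : rescale (2 : ℚ) (PowerSeries.exp ℚ) = PowerSeries.exp ℚ ^ 2 := by
    have := PowerSeries.exp_pow_eq_rescale_exp (A := ℚ) 2
    simpa using this.symm
  have hne : (PowerSeries.exp ℚ - 1) * (PowerSeries.exp ℚ + 1) ≠ 0 :=
    mul_ne_zero aux_exp_sub_one_ne_zero aux_exp_add_one_ne_zero
  rw [h2]
  apply mul_right_cancel₀ hne
  calc PowerSeries.X * G * ((PowerSeries.exp ℚ - 1) * (PowerSeries.exp ℚ + 1))
      = PowerSeries.X * (PowerSeries.exp ℚ - 1) * (G * (PowerSeries.exp ℚ + 1)) := by ring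
    _ = PowerSeries.X * (PowerSeries.exp ℚ - 1) * 2 := by rw [hE]
    _ = 2 * (B * (PowerSeries.exp ℚ - 1)) * (PowerSeries.exp ℚ + 1)
        - 2 * (2 * PowerSeries.X) := by rw [hB]; ring
    _ = 2 * (B * (PowerSeries.exp ℚ - 1)) * (PowerSeries.exp ℚ + 1)
        - 2 * (rescale (2 : ℚ) B * (rescale (2 : ℚ) (PowerSeries.exp ℚ) - 1)) := by rw [hB2]
    _ = (2 * B - 2 * rescale (2 : ℚ) B) *
          ((PowerSeries.exp ℚ - 1) * (PowerSeries.exp ℚ + 1)) := by rw [hexp2]; ring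

/-- Let `E : ℕ → ℚ` be defined by the identity of formal power series
`(∑_{j≥0} (E j / j!) t^j) * (e^t + 1) = 2` in `ℚ⟦t⟧`.  Then for every `j ≥ 1`,
`E j = 2 (-1)^j (2^(1+j) - 1) B_{j+1} / (j+1)`, where `B` denotes the Bernoulli numbers. -/
theorem statement3 (E : ℕ → ℚ)
    (hE : (PowerSeries.mk fun j => E j / j.factorial) * (PowerSeries.exp ℚ + 1) = 2) :
    ∀ j : ℕ, 1 ≤ j →
      E j = 2 * (-1) ^ j * (2 ^ (1 + j) - 1) * bernoulli (j + 1) / (j + 1) := by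
  intro j hj
  have key := aux_key E hE
  have hc := congrArg (PowerSeries.coeff (R := ℚ) (j + 1)) key
  rw [PowerSeries.coeff_succ_X_mul] at hc
  simp only [map_sub, PowerSeries.coeff_C_mul, PowerSeries.coeff_rescale,
    PowerSeries.coeff_mk] at hc
  -- hc : E j / j! = 2 * (bernoulli (j+1) / (j+1)!) - 2 * (2^(j+1) * (bernoulli (j+1) / (j+1)!))
  have hfac : ((j + 1).factorial : ℚ) = ((j : ℚ) + 1) * (j.factorial : ℚ) := by
    rw [Nat.factorial_succ]; push_cast; ring
  have hfj : (j.factorial : ℚ) ≠ 0 := Nat.cast_ne_zero.mpr j.factorial_ne_zero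
  have hj1 : ((j : ℚ) + 1) ≠ 0 := by positivity
  have hEj : E j = 2 * (1 - 2 ^ (j + 1)) * bernoulli (j + 1) / (j + 1) := by
    rw [hfac] at hc
    field_simp at hc
    have hc' := hc
    rw [eq_div_iff hj1]
    linear_combination hc'
  rcases Nat.even_or_odd j with he | ho
  · have hj1odd : Odd (j + 1) := Even.add_one he
    have hjne : j + 1 ≠ 1 := by omega
    have hb : bernoulli (j + 1) = 0 := by
      rw [bernoulli_eq_bernoulli'_of_ne_one hjne]
      exact bernoulli'_eq_zero_of_odd hj1odd (by omega)
    rw [hEj, hb]; simp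
  · have hsign : (-1 : ℚ) ^ j = -1 := ho.neg_one_pow
    rw [hEj, hsign, add_comm 1 j]
    ring
end

section
/- For every natural number j ≥ 1, the function y ↦ ∑_{k=1}^{∞} k^j y^k, defined for real y with |y| < 1, tends to (−1)^j (2^{j+1} − 1) B_{j+1}/(j+1) as y tends to −1 from the right (i.e., the limit along the filter of neighbourhoods of −1 within the interval (−1, 1) exists and equals this value), where B_{j+1} denotes the (j+1)-st Bernoulli number. -/
open Finset PowerSeries

namespace Statement5Aux

/-- Stirling numbers of the second kind. -/
def S : ℕ → ℕ → ℕ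
  | 0, 0 => 1
  | 0, _+1 => 0
  | _+1, 0 => 0
  | n+1, k+1 => (k+1) * S n (k+1) + S n k

@[simp] lemma S_zero_zero : S 0 0 = 1 := rfl
@[simp] lemma S_zero_succ (k : ℕ) : S 0 (k+1) = 0 := rfl
@[simp] lemma S_succ_zero (n : ℕ) : S (n+1) 0 = 0 := rfl
lemma S_succ_succ (n k : ℕ) : S (n+1) (k+1) = (k+1) * S n (k+1) + S n k := rfl

lemma S_eq_zero_of_lt : ∀ {n k : ℕ}, n < k → S n k = 0 := by
  intro n
  induction n with
  | zero => intro k hk; match k, hk with | k+1, _ => rfl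
  | succ n ih =>
    intro k hk
    match k, hk with
    | k+1, hk =>
      rw [S_succ_succ, ih (by omega), ih (by omega)]
      simp

lemma choose_mul_self (n i : ℕ) :
    n * n.choose i = (i+1) * n.choose (i+1) + i * n.choose i := by
  rcases le_or_gt i n with h | h
  · have h1 : n.choose (i+1) * (i+1) = n.choose i * (n - i) := Nat.choose_succ_right_eq n i
    have h2 : n - i + i = n := by omega
    symm
    calc (i+1) * n.choose (i+1) + i * n.choose i
        = n.choose i * (n - i) + n.choose i * i := by rw [← h1]; ring
      _ = n.choose i * (n - i + i) := by rw [Nat.mul_add]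
      _ = n * n.choose i := by rw [h2]; ring
  · rw [Nat.choose_eq_zero_of_lt h, Nat.choose_eq_zero_of_lt (by omega)]
    simp

/-- `n ^ j = ∑_i S(j,i) · i! · C(n,i)`. -/
lemma pow_eq_sum_S (n j : ℕ) :
    n ^ j = ∑ i ∈ range (j+1), S j i * i.factorial * n.choose i := by
  induction j with
  | zero => simp
  | succ j ih =>
    have key : ∀ i, S j i * i.factorial * (n * n.choose i)
        = S j i * (i+1).factorial * n.choose (i+1) + (i * (S j i * i.factorial)) * n.choose i := by
      intro i
      rw [choose_mul_self n i, Nat.factorial_succ]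
      ring
    calc n ^ (j+1) = (∑ i ∈ range (j+1), S j i * i.factorial * n.choose i) * n := by
          rw [pow_succ, ih]
      _ = ∑ i ∈ range (j+1), S j i * i.factorial * (n * n.choose i) := by
          rw [sum_mul]; exact sum_congr rfl fun i _ => by ring
      _ = ∑ i ∈ range (j+1), (S j i * (i+1).factorial * n.choose (i+1)
            + (i * (S j i * i.factorial)) * n.choose i) := by
          exact sum_congr rfl fun i _ => key i
      _ = ∑ i ∈ range (j+1), S j i * (i+1).factorial * n.choose (i+1)
            + ∑ i ∈ range (j+1), (i * (S j i * i.factorial)) * n.choose i := sum_add_distrib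
      _ = ∑ i ∈ range (j+2), S (j+1) i * i.factorial * n.choose i := by
          -- second sum: shift index using vanishing at 0 and at j+1
          have h2 : ∑ i ∈ range (j+1), (i * (S j i * i.factorial)) * n.choose i
              = ∑ i ∈ range (j+1), ((i+1) * (S j (i+1) * (i+1).factorial)) * n.choose (i+1) := by
            have := Finset.sum_range_succ'
              (fun i => (i * (S j i * i.factorial)) * n.choose i) (j+1)
            -- ∑_{range (j+2)} f = ∑_{range (j+1)} f(i+1) + f 0
            rw [Finset.sum_range_succ (fun i => (i * (S j i * i.factorial)) * n.choose i) (j+1)]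
              at this
            simp only [Nat.zero_eq, Nat.zero_mul, Nat.mul_zero, zero_mul, add_zero] at this
            rw [S_eq_zero_of_lt (by omega : j < j+1)] at this
            simpa using this
          rw [h2, ← sum_add_distrib]
          rw [Finset.sum_range_succ' (fun i => S (j+1) i * i.factorial * n.choose i) (j+1)]
          simp only [S_succ_zero, Nat.zero_mul, zero_mul, add_zero]
          exact sum_congr rfl fun i _ => by rw [S_succ_succ]; ring


/-- `∑_{m ≤ j} C(j,m) S(m,i) = S(j+1, i+1)`. -/
lemma binom_S : ∀ j i : ℕ, ∑ m ∈ range (j+1), j.choose m * S m i = S (j+1) (i+1) := by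
  intro j
  induction j with
  | zero =>
    intro i
    cases i with
    | zero => simp [S_succ_succ]
    | succ i => simp [S_succ_succ]
  | succ j ih =>
    intro i
    have shift : ∑ m ∈ range (j+2), (j+1).choose m * S m i
        = ∑ m ∈ range (j+1), (j.choose m + j.choose (m+1)) * S (m+1) i + S 0 i := by
      rw [Finset.sum_range_succ' (fun m => (j+1).choose m * S m i) (j+1)]
      simp only [Nat.choose_succ_succ, Nat.choose_zero_right, one_mul]
    have second : ∑ m ∈ range (j+1), j.choose (m+1) * S (m+1) i + S 0 i
        = S (j+1) (i+1) := by
      have := Finset.sum_range_succ' (fun m => j.choose m * S m i) (j+1)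
      rw [Finset.sum_range_succ (fun m => j.choose m * S m i) (j+1),
        Nat.choose_succ_self, zero_mul, add_zero] at this
      rw [← ih i, this]
      simp
    calc ∑ m ∈ range (j+2), (j+1).choose m * S m i
        = (∑ m ∈ range (j+1), j.choose m * S (m+1) i)
          + (∑ m ∈ range (j+1), j.choose (m+1) * S (m+1) i + S 0 i) := by
          rw [shift]
          rw [Finset.sum_congr rfl (fun m _ => by rw [Nat.add_mul] :
            ∀ m ∈ range (j+1), (j.choose m + j.choose (m+1)) * S (m+1) i
              = j.choose m * S (m+1) i + j.choose (m+1) * S (m+1) i), sum_add_distrib]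
          ring
      _ = (∑ m ∈ range (j+1), j.choose m * S (m+1) i) + S (j+1) (i+1) := by rw [second]
      _ = S (j+2) (i+1) := by
          cases i with
          | zero =>
            simp only [S_succ_zero, Nat.mul_zero, mul_zero, sum_const_zero, zero_add]
            rw [S_succ_succ (j+1) 0, S_succ_zero, add_zero]
            simp
          | succ i =>
            have hterm : ∀ m, j.choose m * S (m+1) (i+1)
                = (i+1) * (j.choose m * S m (i+1)) + j.choose m * S m i := by
              intro m; rw [S_succ_succ]; ring
            rw [Finset.sum_congr rfl fun m _ => hterm m, sum_add_distrib, ← Finset.mul_sum,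
              ih (i+1), ih i, S_succ_succ (j+1) (i+1)]
            ring

noncomputable def Rq (j : ℕ) : ℚ := (-1)^j * (2^(j+1) - 1) * bernoulli (j+1) / (j+1)

noncomputable def G : PowerSeries ℚ := PowerSeries.mk fun n => Rq n / n.factorial

lemma step1 : (X : ℚ⟦X⟧) * rescale (-1) G
    = rescale 2 (bernoulliPowerSeries ℚ) - bernoulliPowerSeries ℚ := by
  ext n
  cases n with
  | zero =>
    rw [map_sub]
    rw [show ((PowerSeries.coeff 0) (X * rescale (-1) G)) = 0 by
      simp [PowerSeries.coeff_zero_eq_constantCoeff]]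
    rw [PowerSeries.coeff_rescale]
    simp [bernoulliPowerSeries]
  | succ n =>
    rw [PowerSeries.coeff_succ_X_mul, coeff_rescale]
    simp only [G, bernoulliPowerSeries, coeff_mk, map_sub, coeff_rescale, coeff_mk,
      Algebra.algebraMap_self, RingHom.id_apply, Rq]
    have hn : ((n+1).factorial : ℚ) = (n+1) * n.factorial := by
      rw [Nat.factorial_succ]; push_cast; ring
    have h1 : ((n.factorial : ℚ)) ≠ 0 := by positivity
    have h2 : ((n:ℚ)+1) ≠ 0 := by positivity
    field_simp [hn]
    ring_nf
    rw [show (-1:ℚ)^(n*2) = 1 from Even.neg_one_pow ⟨n, by ring⟩]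
    rw [add_comm 1 n, hn]
    ring

lemma step2 : rescale (-1 : ℚ) G * (exp ℚ + 1) = -1 := by
  have hb := bernoulliPowerSeries_mul_exp_sub_one ℚ
  have h2 : rescale (2:ℚ) (bernoulliPowerSeries ℚ) * (exp ℚ ^ 2 - 1) = 2 * X := by
    have h := congrArg (rescale (2:ℚ)) hb
    rw [map_mul, map_sub, map_one, rescale_X] at h
    rw [exp_pow_eq_rescale_exp]
    have hC : (PowerSeries.C) (2:ℚ) = (2:ℚ⟦X⟧) := map_ofNat _ 2
    rw [hC] at h
    push_cast
    exact h
  have key : (X : ℚ⟦X⟧) * (exp ℚ - 1) * (rescale (-1) G * (exp ℚ + 1) + 1) = 0 := by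
    have e1 : (X : ℚ⟦X⟧) * rescale (-1) G * ((exp ℚ - 1) * (exp ℚ + 1))
        = (rescale 2 (bernoulliPowerSeries ℚ) - bernoulliPowerSeries ℚ)
          * ((exp ℚ - 1) * (exp ℚ + 1)) := by rw [step1]
    have e2 : (rescale 2 (bernoulliPowerSeries ℚ) - bernoulliPowerSeries ℚ)
        * ((exp ℚ - 1) * (exp ℚ + 1))
        = 2 * X - X * (exp ℚ + 1) := by
      have : (exp ℚ - 1) * (exp ℚ + 1) = exp ℚ ^ 2 - 1 := by ring
      rw [this, sub_mul]
      rw [h2]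
      have : bernoulliPowerSeries ℚ * (exp ℚ ^ 2 - 1)
          = X * (exp ℚ + 1) := by
        have : (exp ℚ ^ 2 - 1 : ℚ⟦X⟧) = (exp ℚ - 1) * (exp ℚ + 1) := by ring
        rw [this, ← mul_assoc, hb]
      rw [this]
    calc (X : ℚ⟦X⟧) * (exp ℚ - 1) * (rescale (-1) G * (exp ℚ + 1) + 1)
        = X * rescale (-1) G * ((exp ℚ - 1) * (exp ℚ + 1)) + X * (exp ℚ - 1) := by ring
      _ = (2 * X - X * (exp ℚ + 1)) + X * (exp ℚ - 1) := by rw [e1, e2]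
      _ = 0 := by ring
  have hX : (X : ℚ⟦X⟧) ≠ 0 := X_ne_zero
  have hexp : (exp ℚ - 1 : ℚ⟦X⟧) ≠ 0 := by
    intro h
    have := congrArg (PowerSeries.coeff 1) h
    simp [coeff_exp] at this
  rcases mul_eq_zero.mp key with h | h
  · rcases mul_eq_zero.mp h with h' | h'
    · exact absurd h' hX
    · exact absurd h' hexp
  · linear_combination (norm := ring_nf) h

lemma step3 : G * (exp ℚ + 1) = -(exp ℚ) := by
  have := congrArg (rescale (-1 : ℚ)) step2
  rw [map_mul, map_add, map_one, map_neg, map_one, rescale_rescale] at this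
  have hgg : rescale ((-1 : ℚ) * (-1)) G = G := by norm_num [rescale_one]
  rw [hgg] at this
  -- this : G * (rescale (-1) (exp ℚ) + 1) = -1
  have := congrArg (fun f => f * exp ℚ) this
  have hee : rescale (-1 : ℚ) (exp ℚ) * exp ℚ = 1 := by
    have := exp_mul_exp_neg_eq_one (A := ℚ)
    rw [mul_comm] at this
    exact this
  calc G * (exp ℚ + 1) = G * (1 + exp ℚ) := by ring
    _ = G * (rescale (-1) (exp ℚ) * exp ℚ + exp ℚ) := by rw [hee]
    _ = G * (rescale (-1) (exp ℚ) + 1) * exp ℚ := by ring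
    _ = -1 * exp ℚ := by rw [this]
    _ = -(exp ℚ) := by ring

lemma R_rec (j : ℕ) : ∑ m ∈ range (j+1), (j.choose m : ℚ) * Rq m = -1 - Rq j := by
  have := congrArg (PowerSeries.coeff j) step3
  rw [PowerSeries.coeff_mul] at this
  rw [Finset.Nat.sum_antidiagonal_eq_sum_range_succ_mk] at this
  simp only [map_add, coeff_exp, coeff_one, G, coeff_mk, map_neg,
    Algebra.algebraMap_self, RingHom.id_apply] at this
  -- this : ∑ m in range (j+1), Rq m / m! * (1/(j-m)! + if j-m = 0 then 1 else 0) = -(1/j!)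
  have hfac : ∀ m, m ∈ range (j+1) →
      (j.factorial : ℚ) * (Rq m / m.factorial * ((1:ℚ)/(j-m).factorial + if j - m = 0 then 1 else 0))
      = (j.choose m : ℚ) * Rq m + if m = j then Rq j else 0 := by
    intro m hm
    rw [mem_range] at hm
    have hmj : m ≤ j := by omega
    have h1 : ((m.factorial : ℚ)) ≠ 0 := by positivity
    have h2 : (((j-m).factorial : ℚ)) ≠ 0 := by positivity
    rw [Nat.cast_choose ℚ hmj]
    by_cases h : m = j
    · subst h
      simp only [Nat.sub_self, Nat.factorial_zero, Nat.cast_one, if_pos rfl, ↓reduceIte]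
      field_simp
    · rw [if_neg h, if_neg (by omega : ¬ (j - m = 0))]
      field_simp
      ring
  have hsum := congrArg (fun x => (j.factorial : ℚ) * x) this
  rw [Finset.mul_sum] at hsum
  rw [Finset.sum_congr rfl hfac, Finset.sum_add_distrib, Finset.sum_ite_eq' (range (j+1)) j] at hsum
  rw [if_pos (self_mem_range_succ j)] at hsum
  have hj : (j.factorial : ℚ) ≠ 0 := by positivity
  have : (j.factorial : ℚ) * -((1:ℚ) / j.factorial) = -1 := by field_simp
  rw [this] at hsum
  linarith [hsum]


noncomputable def Lq (j : ℕ) : ℚ :=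
  ∑ i ∈ range (j+1), (-1)^i * (i.factorial : ℚ) * (S j i : ℚ) / 2^(i+1)

lemma Lq_eq_big (m J : ℕ) (h : m ≤ J) :
    Lq m = ∑ i ∈ range (J+1), (-1)^i * (i.factorial : ℚ) * (S m i : ℚ) / 2^(i+1) := by
  unfold Lq
  apply Finset.sum_subset
  · exact range_subset_range.mpr (by omega)
  · intro i hi hni
    rw [mem_range, not_lt] at hni
    rw [S_eq_zero_of_lt (by omega)]
    simp

lemma L_rec (j : ℕ) (hj : 1 ≤ j) :
    ∑ m ∈ range (j+1), (j.choose m : ℚ) * Lq m = - Lq j := by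
  have swap : ∑ m ∈ range (j+1), (j.choose m : ℚ) * Lq m
      = ∑ i ∈ range (j+1), (-1)^i * (i.factorial : ℚ) / 2^(i+1) * (S (j+1) (i+1) : ℚ) := by
    calc ∑ m ∈ range (j+1), (j.choose m : ℚ) * Lq m
        = ∑ m ∈ range (j+1), ∑ i ∈ range (j+1),
            (j.choose m : ℚ) * ((-1)^i * (i.factorial : ℚ) * (S m i : ℚ) / 2^(i+1)) := by
          refine sum_congr rfl fun m hm => ?_
          rw [Lq_eq_big m j (by rw [mem_range] at hm; omega), Finset.mul_sum]
      _ = ∑ i ∈ range (j+1), ∑ m ∈ range (j+1),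
            (j.choose m : ℚ) * ((-1)^i * (i.factorial : ℚ) * (S m i : ℚ) / 2^(i+1)) :=
          Finset.sum_comm
      _ = _ := by
          refine sum_congr rfl fun i _ => ?_
          have hb : ((∑ m ∈ range (j+1), j.choose m * S m i : ℕ) : ℚ) = (S (j+1) (i+1) : ℚ) := by
            rw [binom_S j i]
          push_cast at hb
          rw [← hb, Finset.mul_sum]
          refine sum_congr rfl fun m _ => ?_
          ring
  rw [swap]
  have hS : ∀ i : ℕ, ((S (j+1) (i+1) : ℚ)) = ((i:ℚ)+1) * (S j (i+1) : ℚ) + (S j i : ℚ) := by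
    intro i; rw [S_succ_succ]; push_cast; ring
  calc ∑ i ∈ range (j+1), (-1)^i * (i.factorial:ℚ)/2^(i+1) * (S (j+1) (i+1):ℚ)
      = ∑ i ∈ range (j+1),
          ((-2) * ((-1)^(i+1) * (((i+1).factorial:ℚ)) * (S j (i+1):ℚ) / 2^(i+1+1))
          + (-1)^i * (i.factorial:ℚ) * (S j i:ℚ) / 2^(i+1)) := by
        refine sum_congr rfl fun i _ => ?_
        rw [hS i, Nat.factorial_succ]
        push_cast
        ring
    _ = (-2) * (∑ i ∈ range (j+1),
          (-1)^(i+1) * (((i+1).factorial:ℚ)) * (S j (i+1):ℚ) / 2^(i+1+1)) + Lq j := by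
        rw [sum_add_distrib, ← Finset.mul_sum, Lq]
    _ = (-2) * Lq j + Lq j := by
        have key : ∑ i ∈ range (j+1),
            (-1)^(i+1) * (((i+1).factorial:ℚ)) * (S j (i+1):ℚ) / 2^(i+1+1) = Lq j := by
          have h0 := Finset.sum_range_succ'
            (fun i => (-1:ℚ)^i * (i.factorial:ℚ) * (S j i:ℚ) / 2^(i+1)) (j+1)
          rw [Finset.sum_range_succ
            (fun i => (-1:ℚ)^i * (i.factorial:ℚ) * (S j i:ℚ) / 2^(i+1)) (j+1)] at h0
          rw [S_eq_zero_of_lt (by omega : j < j+1)] at h0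
          obtain ⟨j', rfl⟩ : ∃ j', j = j' + 1 := ⟨j-1, by omega⟩
          rw [S_succ_zero] at h0
          simp only [Nat.cast_zero, mul_zero, zero_mul, zero_div, add_zero, zero_add,
            Nat.cast_ofNat, pow_zero, one_mul, Nat.factorial_zero, Nat.cast_one] at h0
          rw [← h0, Lq]
        rw [key]
    _ = - Lq j := by ring


lemma L_eq_R : ∀ j : ℕ, 1 ≤ j → Lq j = Rq j := by
  intro j
  induction j using Nat.strong_induction_on with
  | _ j ih =>
    intro hj
    have hL := L_rec j hj
    have hR := R_rec j
    rw [Finset.sum_range_succ] at hL hR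
    simp only [Nat.choose_self, Nat.cast_one, one_mul] at hL hR
    have hdiff : ∑ m ∈ range j, (j.choose m:ℚ) * Lq m
        = ∑ m ∈ range j, (j.choose m:ℚ) * Rq m + 1 := by
      have hterm : ∀ m ∈ range j, (j.choose m:ℚ) * Lq m
          = (j.choose m:ℚ) * Rq m + (if m = 0 then 1 else 0) := by
        intro m hm
        rw [mem_range] at hm
        rcases Nat.eq_zero_or_pos m with rfl | hm0
        · have hl0 : Lq 0 = 1/2 := by simp [Lq]
          have hr0 : Rq 0 = -1/2 := by
            simp [Rq, bernoulli_one]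
            norm_num
          rw [hl0, hr0, if_pos rfl]
          simp
          norm_num
        · rw [ih m hm hm0, if_neg (by omega)]
          ring
      rw [Finset.sum_congr rfl hterm, Finset.sum_add_distrib]
      congr 1
      rw [Finset.sum_ite_eq' (range j) 0 (fun _ => (1:ℚ))]
      rw [if_pos (by rw [mem_range]; omega)]
  -- hL : A + Lq j = -Lq j, hR : A' + Rq j = -1 - Rq j, hdiff : A = A' + 1
    rw [hdiff] at hL
    linarith


variable {y : ℝ}

lemma summable_choose (i : ℕ) (hy : |y| < 1) :
    Summable (fun m : ℕ => (m.choose i : ℝ) * y ^ m) := by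
  have hy' : ‖y‖ < 1 := by rwa [Real.norm_eq_abs]
  have h0 := summable_choose_mul_geometric_of_norm_lt_one (r := y) i hy'
  have h1 : Summable (fun n : ℕ => ((n + i).choose i : ℝ) * y ^ (n + i)) := by
    have := h0.mul_right (y ^ i)
    refine this.congr fun n => ?_
    rw [pow_add]; ring
  exact (summable_nat_add_iff i).mp h1

lemma summable_choose_succ (i : ℕ) (hy : |y| < 1) :
    Summable (fun k : ℕ => ((k+1).choose i : ℝ) * y ^ (k+1)) :=
  (summable_nat_add_iff 1).mpr (summable_choose i hy)

lemma tsum_choose_succ (i : ℕ) (hi : 1 ≤ i) (hy : |y| < 1) :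
    ∑' k : ℕ, ((k+1).choose i : ℝ) * y ^ (k+1) = y^i / (1-y)^(i+1) := by
  have hy' : ‖y‖ < 1 := by rwa [Real.norm_eq_abs]
  have hsum := summable_choose i hy
  have h0 : ∑' m : ℕ, (m.choose i : ℝ) * y ^ m
      = (0:ℝ) + ∑' k : ℕ, ((k+1).choose i : ℝ) * y ^ (k+1) := by
    rw [Summable.tsum_eq_zero_add hsum]
    congr 1
    simp [Nat.choose_eq_zero_of_lt hi]
  have h1 : ∑' m : ℕ, (m.choose i : ℝ) * y ^ m = y^i / (1-y)^(i+1) := by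
    have h2 := Summable.sum_add_tsum_nat_add (f := fun m : ℕ => (m.choose i : ℝ) * y ^ m) i hsum
    have h3 : ∑ m ∈ range i, (m.choose i : ℝ) * y ^ m = 0 := by
      refine Finset.sum_eq_zero fun m hm => ?_
      rw [mem_range] at hm
      rw [Nat.choose_eq_zero_of_lt hm]
      simp
    have h4 : ∑' n : ℕ, ((n + i).choose i : ℝ) * y ^ (n + i)
        = y^i / (1-y)^(i+1) := by
      calc ∑' n : ℕ, ((n + i).choose i : ℝ) * y ^ (n + i)
          = ∑' n : ℕ, (((n + i).choose i : ℝ) * y ^ n) * y ^ i := by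
            refine tsum_congr fun n => ?_
            rw [pow_add]; ring
        _ = (∑' n : ℕ, ((n + i).choose i : ℝ) * y ^ n) * y ^ i := tsum_mul_right
        _ = (1 / (1-y)^(i+1)) * y^i := by
            rw [tsum_choose_mul_geometric_of_norm_lt_one i hy']
        _ = y^i / (1-y)^(i+1) := by ring
    rw [h3, zero_add, h4] at h2
    exact h2.symm
  rw [h1, zero_add] at h0
  exact h0.symm

lemma closed_form (j : ℕ) (hj : 1 ≤ j) (hy : |y| < 1) :
    ∑' k : ℕ, ((k:ℝ)+1)^j * y^(k+1)
      = ∑ i ∈ range (j+1), ((S j i * i.factorial : ℕ) : ℝ) * (y^i / (1-y)^(i+1)) := by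
  have hrw : ∀ k : ℕ, ((k:ℝ)+1)^j * y^(k+1)
      = ∑ i ∈ range (j+1), ((S j i * i.factorial : ℕ) : ℝ) * (((k+1).choose i : ℝ) * y^(k+1)) := by
    intro k
    have hnat := pow_eq_sum_S (k+1) j
    have hc : (((k+1 : ℕ) : ℝ))^j
        = ∑ i ∈ range (j+1), ((S j i * i.factorial : ℕ) : ℝ) * ((k+1).choose i : ℝ) := by
      rw [← Nat.cast_pow, hnat]
      push_cast
      exact Finset.sum_congr rfl fun i _ => by ring
    calc ((k:ℝ)+1)^j * y^(k+1)
        = (((k+1 : ℕ) : ℝ))^j * y^(k+1) := by push_cast; ring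
      _ = (∑ i ∈ range (j+1), ((S j i * i.factorial : ℕ) : ℝ) * ((k+1).choose i : ℝ)) * y^(k+1) := by
          rw [hc]
      _ = _ := by rw [Finset.sum_mul]; exact Finset.sum_congr rfl fun i _ => by ring
  rw [tsum_congr hrw]
  rw [Summable.tsum_finsetSum (fun i _ => ((summable_choose_succ i hy).mul_left _))]
  refine Finset.sum_congr rfl fun i hi => ?_
  rcases Nat.eq_zero_or_pos i with rfl | hi0
  · obtain ⟨j', rfl⟩ : ∃ j', j = j' + 1 := ⟨j-1, by omega⟩
    rw [S_succ_zero]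
    simp
  · rw [tsum_mul_left, tsum_choose_succ i hi0 hy]

lemma limit_closed_form (j : ℕ) :
    Filter.Tendsto
      (fun y : ℝ => ∑ i ∈ range (j+1), ((S j i * i.factorial : ℕ) : ℝ) * (y^i / (1-y)^(i+1)))
      (nhdsWithin (-1) (Set.Ioo (-1) 1))
      (nhds (∑ i ∈ range (j+1), ((S j i * i.factorial : ℕ) : ℝ) * ((-1)^i / 2^(i+1)))) := by
  refine Filter.Tendsto.mono_left ?_ nhdsWithin_le_nhds
  have : ∀ i ∈ range (j+1),
      Filter.Tendsto (fun y : ℝ => ((S j i * i.factorial : ℕ) : ℝ) * (y^i / (1-y)^(i+1)))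
        (nhds (-1)) (nhds (((S j i * i.factorial : ℕ) : ℝ) * ((-1)^i / 2^(i+1)))) := by
    intro i _
    have hcont : ContinuousAt (fun y : ℝ => ((S j i * i.factorial : ℕ) : ℝ) * (y^i / (1-y)^(i+1)))
        (-1) := by
      apply ContinuousAt.mul continuousAt_const
      apply ContinuousAt.div
      · exact continuousAt_id.pow i
      · exact (continuousAt_const.sub continuousAt_id).pow (i+1)
      · norm_num
    have h2 : (fun y : ℝ => ((S j i * i.factorial : ℕ) : ℝ) * (y^i / (1-y)^(i+1))) (-1)
        = ((S j i * i.factorial : ℕ) : ℝ) * ((-1)^i / 2^(i+1)) := by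
      norm_num
    rw [← h2]
    exact hcont.tendsto
  exact tendsto_finset_sum _ this

end Statement5Aux

open Statement5Aux Finset in
/-- For every natural number `j ≥ 1`, the function
`y ↦ ∑_{k ≥ 1} k^j y^k` (defined for `|y| < 1`) tends to
`(-1)^j (2^(j+1) - 1) B_{j+1} / (j+1)` as `y → -1⁺` along the interval `(-1, 1)`,
where `B_{j+1}` is the `(j+1)`-st Bernoulli number. -/
theorem statement5 (j : ℕ) (hj : 1 ≤ j) :
    Filter.Tendsto (fun y : ℝ => ∑' k : ℕ, ((k : ℝ) + 1) ^ j * y ^ (k + 1))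
      (nhdsWithin (-1) (Set.Ioo (-1) 1))
      (nhds ((-1 : ℝ) ^ j * (2 ^ (j + 1) - 1) * ((bernoulli (j + 1) : ℚ) : ℝ) / (j + 1))) := by
  have hval : (∑ i ∈ range (j+1), ((S j i * i.factorial : ℕ) : ℝ) * ((-1)^i / 2^(i+1)))
      = ((Rq j : ℚ) : ℝ) := by
    rw [← L_eq_R j hj, Lq]
    push_cast
    exact Finset.sum_congr rfl fun i _ => by ring
  have hRq : ((Rq j : ℚ) : ℝ)
      = (-1 : ℝ) ^ j * (2 ^ (j + 1) - 1) * ((bernoulli (j + 1) : ℚ) : ℝ) / (j + 1) := by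
    rw [Rq]
    push_cast
    ring
  have heq : (fun y : ℝ =>
        ∑ i ∈ range (j+1), ((S j i * i.factorial : ℕ) : ℝ) * (y^i / (1-y)^(i+1)))
      =ᶠ[nhdsWithin (-1) (Set.Ioo (-1) 1)]
      (fun y : ℝ => ∑' k : ℕ, ((k : ℝ) + 1) ^ j * y ^ (k + 1)) := by
    filter_upwards [self_mem_nhdsWithin] with y hy
    have hy' : |y| < 1 := abs_lt.mpr ⟨hy.1, hy.2⟩
    exact (closed_form j hj hy').symm
  have hmain := (limit_closed_form j).congr' heq
  rwa [hval, hRq] at hmain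
end

section
/- Let T be a real Banach space, let δ be a natural number and let d_0, d_1, …, d_δ ∈ T. For each natural number k set h_k := ∑_{j=0}^{δ} k^j • d_j (with the convention 0^0 = 1). Then: (i) for every real number y with |y| < 1 the series ∑_{k=0}^{∞} y^k • h_k converges absolutely in T; and (ii) as y tends to −1 from the right (along the interval (−1, 1)), the sum ∑_{k=0}^{∞} y^k • h_k tends to (1/2) ∑_{j=0}^{δ} E_j • d_j, where E_0 = 1 and, for j ≥ 1, E_j := 2(−1)^j (2^{1+j} − 1) B_{j+1}/(j+1), with B_{j+1} the (j+1)-st Bernoulli number. -/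
open Finset PowerSeries Filter

namespace S6

lemma two_eq_C : (2 : ℚ⟦X⟧) = PowerSeries.C (R := ℚ) 2 := by
  rw [map_ofNat]

lemma exp_sq_sub_one_ne : (exp ℚ) ^ 2 - 1 ≠ 0 := by
  intro hcon
  have h := congrArg (PowerSeries.coeff (R := ℚ) 1) hcon
  rw [map_sub, exp_pow_eq_rescale_exp, coeff_rescale, coeff_exp] at h
  norm_num at h

lemma rescale_bps_mul : rescale (2 : ℚ) (bernoulliPowerSeries ℚ) * ((exp ℚ) ^ 2 - 1) = 2 * X := by
  have h2 : (exp ℚ) ^ 2 - 1 = rescale (2 : ℚ) (exp ℚ - 1) := by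
    rw [map_sub, exp_pow_eq_rescale_exp, map_one]
    norm_num
  rw [h2, ← map_mul, bernoulliPowerSeries_mul_exp_sub_one, two_eq_C]
  ext n
  rw [coeff_rescale, PowerSeries.coeff_C_mul]
  rcases n with _ | _ | n <;> simp [coeff_X]

lemma key_ps : exp ℚ * rescale (2 : ℚ) (bernoulliPowerSeries ℚ)
    = 2 * bernoulliPowerSeries ℚ - rescale (2 : ℚ) (bernoulliPowerSeries ℚ) := by
  apply mul_right_cancel₀ exp_sq_sub_one_ne
  rw [mul_assoc, rescale_bps_mul, sub_mul, rescale_bps_mul]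
  have hb := bernoulliPowerSeries_mul_exp_sub_one ℚ
  linear_combination (-(2 * (exp ℚ + 1))) * hb

end S6

namespace S6
open Nat

lemma sum_choose_two_pow_bernoulli (n : ℕ) :
    ∑ m ∈ range (n + 1), (n.choose m : ℚ) * 2 ^ m * bernoulli m
      = (2 - 2 ^ n) * bernoulli n := by
  have h := congrArg (PowerSeries.coeff (R := ℚ) n) key_ps
  rw [PowerSeries.coeff_mul, map_sub, two_eq_C, PowerSeries.coeff_C_mul] at h
  simp only [coeff_rescale, bernoulliPowerSeries, coeff_mk, coeff_exp, Algebra.algebraMap_self,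
    RingHom.id_apply] at h
  rw [Finset.Nat.sum_antidiagonal_eq_sum_range_succ
    (fun i m => (1 / (i ! : ℚ)) * ((2 : ℚ) ^ m * (bernoulli m / m !)))] at h
  have hfac : ∀ m : ℕ, ((m ! : ℚ)) ≠ 0 := fun m => Nat.cast_ne_zero.mpr m.factorial_ne_zero
  calc ∑ m ∈ range (n + 1), (n.choose m : ℚ) * 2 ^ m * bernoulli m
      = ∑ k ∈ range (n + 1), (n.choose (n - k) : ℚ) * 2 ^ (n - k) * bernoulli (n - k) := by
        rw [← Finset.sum_range_reflect]
        simp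
    _ = ∑ k ∈ range (n + 1), (n ! : ℚ) * ((1 / (k ! : ℚ)) * ((2:ℚ) ^ (n-k) * (bernoulli (n-k) / (n-k)!))) := by
        refine Finset.sum_congr rfl fun k hk => ?_
        rw [Finset.mem_range] at hk
        have hk' : k ≤ n := Nat.lt_succ_iff.mp hk
        rw [Nat.choose_symm hk', Nat.cast_choose ℚ hk']
        field_simp
    _ = (n ! : ℚ) * ∑ k ∈ range (n + 1), (1 / (k ! : ℚ)) * ((2:ℚ) ^ (n-k) * (bernoulli (n-k) / (n-k)!)) := by
        rw [Finset.mul_sum]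
    _ = (n ! : ℚ) * (2 * (bernoulli n / n !) - 2 ^ n * (bernoulli n / n !)) := by rw [h]
    _ = (2 - 2 ^ n) * bernoulli n := by field_simp

end S6

namespace S6

noncomputable def e (j : ℕ) : ℚ := 2 * (1 - 2 ^ (j + 1)) * bernoulli (j + 1) / (j + 1)

lemma e_zero : e 0 = 1 := by norm_num [e]

lemma sum_choose_e {j : ℕ} (hj : 1 ≤ j) :
    ∑ i ∈ range (j + 1), (j.choose i : ℚ) * e i = - e j := by
  have hj1 : ((j : ℚ) + 1) ≠ 0 := by positivity
  refine mul_left_cancel₀ hj1 ?_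
  have step1 : ((j : ℚ) + 1) * ∑ i ∈ range (j + 1), (j.choose i : ℚ) * e i
      = ∑ i ∈ range (j + 1),
          2 * ((j + 1).choose (i + 1) : ℚ) * (1 - 2 ^ (i + 1)) * bernoulli (i + 1) := by
    rw [Finset.mul_sum]
    refine Finset.sum_congr rfl fun i _ => ?_
    have hn : (j + 1) * j.choose i = (j + 1).choose (i + 1) * (i + 1) := by
      rw [← Nat.add_one_mul_choose_eq]
    have hq : ((j : ℚ) + 1) * (j.choose i : ℚ) = ((j + 1).choose (i + 1) : ℚ) * ((i : ℚ) + 1) := by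
      exact_mod_cast congrArg (fun x : ℕ => (x : ℚ)) hn
    have hi1 : ((i : ℚ) + 1) ≠ 0 := by positivity
    rw [e, ← mul_assoc, hq]
    field_simp
  rw [step1]
  have step2 : ∑ i ∈ range (j + 1),
        2 * ((j + 1).choose (i + 1) : ℚ) * (1 - 2 ^ (i + 1)) * bernoulli (i + 1)
      = ∑ m ∈ range (j + 2), 2 * ((j + 1).choose m : ℚ) * (1 - 2 ^ m) * bernoulli m := by
    rw [Finset.sum_range_succ' (fun m => 2 * ((j + 1).choose m : ℚ) * (1 - 2 ^ m) * bernoulli m)]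
    norm_num
  rw [step2]
  have split : ∑ m ∈ range (j + 2), 2 * ((j + 1).choose m : ℚ) * (1 - 2 ^ m) * bernoulli m
      = 2 * (∑ m ∈ range (j + 2), ((j + 1).choose m : ℚ) * bernoulli m)
        - 2 * (∑ m ∈ range (j + 2), ((j + 1).choose m : ℚ) * 2 ^ m * bernoulli m) := by
    rw [Finset.mul_sum, Finset.mul_sum, ← Finset.sum_sub_distrib]
    exact Finset.sum_congr rfl fun m _ => by ring
  have first : ∑ m ∈ range (j + 2), ((j + 1).choose m : ℚ) * bernoulli m = bernoulli (j + 1) := by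
    rw [Finset.sum_range_succ, sum_bernoulli]
    have : j + 1 ≠ 1 := by omega
    simp [this]
    omega
  rw [split, first, sum_choose_two_pow_bernoulli (j + 1), e]
  field_simp
  ring

end S6

namespace S6
open Filter Set

lemma summable_F {y : ℝ} (hy : |y| < 1) (j : ℕ) :
    Summable fun k : ℕ => (k : ℝ) ^ j * y ^ k :=
  summable_pow_mul_geometric_of_norm_lt_one j (by rwa [Real.norm_eq_abs])

lemma F_eq {y : ℝ} (hy : |y| < 1) (j : ℕ) :
    (∑' k : ℕ, (k : ℝ) ^ j * y ^ k)
      = ((if j = 0 then (1:ℝ) else 0)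
          + y * ∑ i ∈ range j, (j.choose i : ℝ) * ∑' k : ℕ, (k : ℝ) ^ i * y ^ k) / (1 - y) := by
  have hy1 : (1 : ℝ) - y ≠ 0 := by
    have := abs_lt.mp hy
    intro hc; linarith [this.2]
  have h1 : (∑' k : ℕ, (k : ℝ) ^ j * y ^ k)
      = ((0:ℕ) : ℝ) ^ j * y ^ 0 + ∑' k : ℕ, ((k + 1 : ℕ) : ℝ) ^ j * y ^ (k + 1) :=
    Summable.tsum_eq_zero_add (summable_F hy j)
  have h2 : ∀ k : ℕ, ((k + 1 : ℕ) : ℝ) ^ j * y ^ (k + 1)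
      = y * ∑ i ∈ range (j + 1), (j.choose i : ℝ) * ((k : ℝ) ^ i * y ^ k) := by
    intro k
    push_cast
    rw [add_pow, Finset.sum_mul, Finset.mul_sum]
    refine Finset.sum_congr rfl fun i _ => ?_
    ring
  have h3 : (∑' k : ℕ, ((k + 1 : ℕ) : ℝ) ^ j * y ^ (k + 1))
      = y * ∑ i ∈ range (j + 1), (j.choose i : ℝ) * ∑' k : ℕ, (k : ℝ) ^ i * y ^ k := by
    simp_rw [h2]
    rw [tsum_mul_left]
    congr 1
    rw [Summable.tsum_finsetSum (fun i _ => ((summable_F hy i).mul_left _))]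
    exact Finset.sum_congr rfl fun i _ => (tsum_mul_left)
  rw [h3, Finset.sum_range_succ, Nat.choose_self] at h1
  have hzp : ((0:ℕ) : ℝ) ^ j * y ^ 0 = (if j = 0 then (1:ℝ) else 0) := by
    simp [zero_pow_eq]
  rw [hzp] at h1
  rw [eq_div_iff hy1]
  linear_combination h1

lemma value_eq (j : ℕ) :
    ((if j = 0 then (1:ℝ) else 0)
        + (-1) * ∑ i ∈ range j, (j.choose i : ℝ) * (((e i : ℚ) : ℝ) / 2)) / (1 - (-1))
      = ((e j : ℚ) : ℝ) / 2 := by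
  rcases Nat.eq_zero_or_pos j with hj | hj
  · subst hj; norm_num [e_zero]
  · have hq : ∑ i ∈ range j, (j.choose i : ℚ) * e i = -2 * e j := by
      have := sum_choose_e hj
      rw [Finset.sum_range_succ, Nat.choose_self] at this
      push_cast at this
      linarith
    have hr : ∑ i ∈ range j, (j.choose i : ℝ) * (((e i : ℚ) : ℝ) / 2)
        = ((-2 * e j : ℚ) : ℝ) / 2 := by
      rw [← hq]
      push_cast
      rw [Finset.sum_div]
      exact Finset.sum_congr rfl fun i _ => by ring
    rw [hr]
    have : j ≠ 0 := by omega
    simp only [this, if_false]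
    push_cast
    ring

lemma tendsto_F (j : ℕ) :
    Tendsto (fun y : ℝ => ∑' k : ℕ, (k : ℝ) ^ j * y ^ k)
      (nhdsWithin (-1) (Set.Ioo (-1) 1)) (nhds (((e j : ℚ) : ℝ) / 2)) := by
  induction j using Nat.strong_induction_on with
  | _ j ih =>
    have hy1 : Tendsto (fun y : ℝ => y) (nhdsWithin (-1) (Set.Ioo (-1) 1)) (nhds (-1)) :=
      tendsto_id.mono_left nhdsWithin_le_nhds
    have hnum : Tendsto
        (fun y : ℝ => (if j = 0 then (1:ℝ) else 0)
            + y * ∑ i ∈ range j, (j.choose i : ℝ) * ∑' k : ℕ, (k : ℝ) ^ i * y ^ k)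
        (nhdsWithin (-1) (Set.Ioo (-1) 1))
        (nhds ((if j = 0 then (1:ℝ) else 0)
            + (-1) * ∑ i ∈ range j, (j.choose i : ℝ) * (((e i : ℚ) : ℝ) / 2))) :=
      tendsto_const_nhds.add (hy1.mul (tendsto_finset_sum _ fun i hi =>
        tendsto_const_nhds.mul (ih i (Finset.mem_range.mp hi))))
    have hden : Tendsto (fun y : ℝ => 1 - y) (nhdsWithin (-1) (Set.Ioo (-1) 1))
        (nhds (1 - (-1))) := tendsto_const_nhds.sub hy1
    have hdiv := hnum.div hden (by norm_num)
    rw [value_eq j] at hdiv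
    refine hdiv.congr' ?_
    filter_upwards [eventually_mem_nhdsWithin] with y hy
    have hyabs : |y| < 1 := abs_lt.mpr ⟨hy.1, hy.2⟩
    exact (F_eq hyabs j).symm

end S6

namespace S6

lemma e_real {j : ℕ} (hj : 1 ≤ j) :
    ((e j : ℚ) : ℝ)
      = 2 * (-1) ^ j * (2 ^ (1 + j) - 1) * ((bernoulli (j + 1) : ℚ) : ℝ) / (j + 1) := by
  have hsign : ((-1 : ℚ)) ^ j * bernoulli (j + 1) = - bernoulli (j + 1) := by
    rcases Nat.even_or_odd j with he | ho
    · have hj1 : j + 1 ≠ 1 := by omega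
      have hz : bernoulli (j + 1) = 0 := by
        rw [bernoulli_eq_bernoulli'_of_ne_one hj1]
        exact bernoulli'_eq_zero_of_odd he.add_one (by omega)
      simp [hz]
    · simp [ho.neg_one_pow]
  have hq : e j = 2 * (-1) ^ j * (2 ^ (1 + j) - 1) * bernoulli (j + 1) / ((j : ℚ) + 1) := by
    rw [e]
    congr 1
    linear_combination (2 - 2 * (2 : ℚ) ^ (1 + j)) * hsign
  rw [hq]
  push_cast
  ring

end S6

open S6 Filter Set Finset in
/-- Let `T` be a real Banach space, `δ : ℕ` and `d 0, …, d δ ∈ T`.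
For `k : ℕ` set `h k := ∑_{j=0}^{δ} k^j • d j` (with `0^0 = 1`).  Then:
(i) for every real `y` with `|y| < 1` the series `∑_{k≥0} y^k • h k` converges absolutely;
(ii) as `y → -1⁺` along `(-1, 1)`, the sum `∑_{k≥0} y^k • h k` tends to
`(1/2) • ∑_{j=0}^{δ} E j • d j`, where `E 0 = 1` and
`E j = 2 (-1)^j (2^(1+j) - 1) B_{j+1} / (j+1)` for `j ≥ 1`. -/
theorem statement6 {T : Type*} [NormedAddCommGroup T] [NormedSpace ℝ T] [CompleteSpace T]
    (δ : ℕ) (d : ℕ → T) (h : ℕ → T)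
    (hh : ∀ k : ℕ, h k = ∑ j ∈ Finset.range (δ + 1), ((k : ℝ) ^ j) • d j)
    (E : ℕ → ℝ) (hE0 : E 0 = 1)
    (hE : ∀ j : ℕ, 1 ≤ j →
      E j = 2 * (-1) ^ j * (2 ^ (1 + j) - 1) * ((bernoulli (j + 1) : ℚ) : ℝ) / (j + 1)) :
    (∀ y : ℝ, |y| < 1 → Summable fun k : ℕ => ‖y ^ k • h k‖) ∧
    Filter.Tendsto (fun y : ℝ => ∑' k : ℕ, y ^ k • h k)
      (nhdsWithin (-1) (Set.Ioo (-1) 1))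
      (nhds ((1 / 2 : ℝ) • ∑ j ∈ Finset.range (δ + 1), E j • d j)) := by
  have hEe : ∀ j : ℕ, E j = ((e j : ℚ) : ℝ) := by
    intro j
    rcases Nat.eq_zero_or_pos j with hj | hj
    · subst hj; rw [hE0, e_zero]; norm_num
    · rw [hE j hj, e_real hj]
  -- rewrite of the term
  have hterm : ∀ (y : ℝ) (k : ℕ), y ^ k • h k
      = ∑ j ∈ Finset.range (δ + 1), ((k : ℝ) ^ j * y ^ k) • d j := by
    intro y k
    rw [hh k, Finset.smul_sum]
    exact Finset.sum_congr rfl fun j _ => by rw [smul_smul, mul_comm]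
  constructor
  · intro y hy
    have hmaj : Summable fun k : ℕ =>
        ∑ j ∈ Finset.range (δ + 1), ((k : ℝ) ^ j * |y| ^ k) * ‖d j‖ := by
      refine summable_sum fun j _ => ?_
      exact (summable_F (by rwa [abs_abs]) j).mul_right _
    refine Summable.of_nonneg_of_le (fun k => norm_nonneg _) (fun k => ?_) hmaj
    rw [hterm y k]
    refine (norm_sum_le _ _).trans ?_
    refine Finset.sum_le_sum fun j _ => ?_
    rw [norm_smul, Real.norm_eq_abs, abs_mul, abs_pow, abs_pow, Nat.abs_cast]
  · have hsum_eq : ∀ y ∈ Set.Ioo (-1 : ℝ) 1, (∑' k : ℕ, y ^ k • h k)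
        = ∑ j ∈ Finset.range (δ + 1), (∑' k : ℕ, (k : ℝ) ^ j * y ^ k) • d j := by
      intro y hy
      have hyabs : |y| < 1 := abs_lt.mpr ⟨hy.1, hy.2⟩
      calc (∑' k : ℕ, y ^ k • h k)
          = ∑' k : ℕ, ∑ j ∈ Finset.range (δ + 1), ((k : ℝ) ^ j * y ^ k) • d j := by
            exact tsum_congr fun k => hterm y k
        _ = ∑ j ∈ Finset.range (δ + 1), ∑' k : ℕ, ((k : ℝ) ^ j * y ^ k) • d j :=
            Summable.tsum_finsetSum fun j _ => (summable_F hyabs j).smul_const _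
        _ = ∑ j ∈ Finset.range (δ + 1), (∑' k : ℕ, (k : ℝ) ^ j * y ^ k) • d j :=
            Finset.sum_congr rfl fun j _ => Summable.tsum_smul_const (summable_F hyabs j) _
    have hlim : Tendsto (fun y : ℝ =>
        ∑ j ∈ Finset.range (δ + 1), (∑' k : ℕ, (k : ℝ) ^ j * y ^ k) • d j)
        (nhdsWithin (-1) (Set.Ioo (-1) 1))
        (nhds (∑ j ∈ Finset.range (δ + 1), (((e j : ℚ) : ℝ) / 2) • d j)) :=
      tendsto_finset_sum _ fun j _ => (tendsto_F j).smul_const _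
    have hval : (∑ j ∈ Finset.range (δ + 1), (((e j : ℚ) : ℝ) / 2) • d j)
        = (1 / 2 : ℝ) • ∑ j ∈ Finset.range (δ + 1), E j • d j := by
      rw [Finset.smul_sum]
      refine Finset.sum_congr rfl fun j _ => ?_
      rw [hEe j, smul_smul]
      congr 1
      ring
    rw [hval] at hlim
    refine hlim.congr' ?_
    filter_upwards [eventually_mem_nhdsWithin] with y hy
    exact (hsum_eq y hy).symm
end
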